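/- arXiv:1903.07777 — 5 statements merged into one kernel-verified Lean document; each statement's English description precedes it below -/
import Mathlib

section
/- The map sending a superpartition given as a pair (Λ^a; Λ^s), where Λ^a is a strictly decreasing sequence of m nonnegative integers and Λ^s is a partition, to the pair of partitions (Λ*, Λ^⊛) with Λ* = sort(Λ^a ∪ Λ^s) and Λ^⊛ = sort((Λ^a + 1^m) ∪ Λ^s), is a bijection onto the set of pairs of partitions (λ, μ) such that λ ⊆ μ and the skew diagram μ/λ is simultaneously a horizontal strip and a vertical strip (with |μ/λ| = m). -/
/-- A function `ℕ → ℕ` represents a partition: non-increasing and eventually zero. -/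
def IsPartitionFn (f : ℕ → ℕ) : Prop :=
  (∀ ⦃i j : ℕ⦄, i ≤ j → f j ≤ f i) ∧ ∃ N, ∀ i, N ≤ i → f i = 0

/-- The cell `(i,j)` (0-indexed) belongs to the skew diagram `mu/lam`. -/
def SkewCell (lam mu : ℕ → ℕ) (i j : ℕ) : Prop := lam i ≤ j ∧ j < mu i

/-- The skew diagram `mu/lam` has at most one cell in each column. -/
def HorizStrip (lam mu : ℕ → ℕ) : Prop :=
  ∀ j i i', SkewCell lam mu i j → SkewCell lam mu i' j → i = i'

/-- The skew diagram `mu/lam` has at most one cell in each row. -/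
def VertStrip (lam mu : ℕ → ℕ) : Prop := ∀ i, mu i ≤ lam i + 1

/-- A superpartition of fermionic degree `m`: a strictly decreasing sequence `a` of
`m` nonnegative integers together with an ordinary partition `s` (a non-increasing
list of positive integers). -/
structure SuperPartition (m : ℕ) where
  a : Fin m → ℕ
  a_strictAnti : ∀ ⦃i j : Fin m⦄, i < j → a j < a i
  s : List ℕ
  s_sorted : s.Pairwise (· ≥ ·)
  s_pos : ∀ x ∈ s, 0 < x

/-- Sort a finite multiset of naturals into the non-increasing function it defines. -/
def sortFn (ms : Multiset ℕ) : ℕ → ℕ := fun i => (ms.sort (· ≥ ·)).getD i 0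

/-- `Λ* = sort(Λᵃ ∪ Λˢ)`. -/
def SuperPartition.starFn {m : ℕ} (Λ : SuperPartition m) : ℕ → ℕ :=
  sortFn ((List.ofFn Λ.a : Multiset ℕ) + (Λ.s : Multiset ℕ))

/-- `Λ^⊛ = sort((Λᵃ + 1ᵐ) ∪ Λˢ)`. -/
def SuperPartition.circFn {m : ℕ} (Λ : SuperPartition m) : ℕ → ℕ :=
  sortFn ((List.ofFn (fun i => Λ.a i + 1) : Multiset ℕ) + (Λ.s : Multiset ℕ))

/-!
A multiset `ms` of naturals and its sorted partition `sortFn ms` are linked through the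
conjugate `numGT ms t = #{x ∈ ms | t < x}` by `t < sortFn ms i ↔ i < numGT ms t`. Raising the
distinct entries of `Λᵃ` by one gives `numGT Λ* t ≤ numGT Λ^⊛ t ≤ numGT Λ* t + 1` and
`numGT Λ^⊛ (t + 1) ≤ numGT Λ* t`; on the rows these read `Λ*ᵢ ≤ Λ^⊛ᵢ`, `Λ^⊛ᵢ₊₁ ≤ Λ*ᵢ`
(a horizontal strip) and `Λ^⊛ᵢ ≤ Λ*ᵢ + 1` (a vertical strip).

Conversely, for such a pair `(λ, μ)` the rows with `λᵢ < μᵢ` carry the fermionic parts: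
`Λᵃ` lists `λ` on these rows and `Λˢ` the remaining nonzero parts of `λ`. For injectivity,
`Λ*` and `Λ^⊛` determine the multiplicities of the positive parts of `Λᵃ ∪ Λˢ` and of
`(Λᵃ + 1ᵐ) ∪ Λˢ`; comparing them, the difference of the multiplicities of `t` in two candidate
`Λᵃ` does not depend on `t`, hence vanishes.
-/

open Finset

/-- The conjugate of the partition `sortFn ms` (see `lt_sortFn_iff`). -/
def numGT (ms : Multiset ℕ) (t : ℕ) : ℕ := ms.countP (t < ·)

def IsRookStrip (lam mu : ℕ → ℕ) (m : ℕ) : Prop :=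
  IsPartitionFn lam ∧ IsPartitionFn mu ∧ (∀ i, lam i ≤ mu i) ∧
    HorizStrip lam mu ∧ VertStrip lam mu ∧ (∑ᶠ i, (mu i - lam i)) = m

lemma List.lt_getD_iff_lt_countP {L : List ℕ} (hL : L.Pairwise (· ≥ ·)) (i t : ℕ) :
    t < L.getD i 0 ↔ i < L.countP (t < ·) := by
  induction L generalizing i with
  | nil => simp
  | cons x xs ih =>
    obtain ⟨hx, hxs⟩ := List.pairwise_cons.mp hL
    by_cases htx : t < x
    · cases i with
      | zero => simp [htx]
      | succ i => rw [List.getD_cons_succ, ih hxs]; simp [htx]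
    · have h0 : xs.countP (t < ·) = 0 :=
        List.countP_eq_zero.mpr fun y hy hty => htx (by have := hx y hy; simp at hty; omega)
      cases i with
      | zero => simp [htx, h0]
      | succ i => rw [List.getD_cons_succ, ih hxs]; simp [htx, h0]

lemma List.sum_range_getD (L : List ℕ) {N : ℕ} (h : L.length ≤ N) :
    ∑ i ∈ Finset.range N, L.getD i 0 = L.sum := by
  induction L generalizing N with
  | nil => simp
  | cons x xs ih =>
    obtain ⟨N, rfl⟩ : ∃ n, N = n + 1 := Nat.exists_eq_add_one.mpr (by simp at h; omega)
    simp only [Finset.sum_range_succ', List.getD_cons_succ, List.getD_cons_zero, List.sum_cons,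
      ih (show xs.length ≤ N by simpa using h), add_comm]

section SortFn

variable {ms ms' : Multiset ℕ}

lemma lt_sortFn_iff {i t : ℕ} : t < sortFn ms i ↔ i < numGT ms t := by
  rw [sortFn, List.lt_getD_iff_lt_countP (Multiset.pairwise_sort _ _), numGT,
    ← Multiset.coe_countP, Multiset.sort_eq]

lemma sortFn_eq_of_lt_iff {f : ℕ → ℕ} (h : ∀ i t, t < f i ↔ i < numGT ms t) :
    sortFn ms = f :=
  funext fun i => eq_of_forall_lt_iff fun t => lt_sortFn_iff.trans (h i t).symm

lemma numGT_eq_of_sortFn_eq (h : sortFn ms = sortFn ms') : numGT ms = numGT ms' :=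
  funext fun t => eq_of_forall_lt_iff fun i => by rw [← lt_sortFn_iff, ← lt_sortFn_iff, h]

lemma sortFn_add_le_add {a b : ℕ} (h : ∀ t, numGT ms' (t + a) ≤ numGT ms t + b) (i : ℕ) :
    sortFn ms' (i + b) ≤ sortFn ms i + a := by
  by_contra! hlt
  have hi : i < numGT ms (sortFn ms i) := by
    have := lt_sortFn_iff.mp hlt
    have := h (sortFn ms i)
    omega
  exact lt_irrefl _ (lt_sortFn_iff.mpr hi)

lemma sortFn_antitone (ms : Multiset ℕ) : Antitone (sortFn ms) := fun i j hij => by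
  simpa [Nat.add_sub_cancel' hij] using
    sortFn_add_le_add (ms := ms) (a := 0) (b := j - i) (fun t => Nat.le_add_right _ _) i

lemma sortFn_eq_zero {i : ℕ} (h : Multiset.card ms ≤ i) : sortFn ms i = 0 := by
  by_contra hne
  have := lt_sortFn_iff.mp (Nat.pos_of_ne_zero hne)
  have := Multiset.countP_le_card (0 < ·) ms
  rw [numGT] at *
  omega

lemma isPartitionFn_sortFn (ms : Multiset ℕ) : IsPartitionFn (sortFn ms) :=
  ⟨sortFn_antitone ms, Multiset.card ms, fun _ => sortFn_eq_zero⟩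

lemma sum_range_sortFn {N : ℕ} (h : Multiset.card ms ≤ N) :
    ∑ i ∈ range N, sortFn ms i = ms.sum := by
  conv_rhs => rw [← Multiset.sort_eq ms (· ≥ ·)]
  exact List.sum_range_getD _ (by rw [Multiset.length_sort]; exact h)

lemma count_succ_add_numGT_succ (ms : Multiset ℕ) (t : ℕ) :
    ms.count (t + 1) + numGT ms (t + 1) = numGT ms t := by
  induction ms using Multiset.induction with
  | empty => simp [numGT]
  | cons x s ih =>
    simp only [numGT, Multiset.count_cons, Multiset.countP_cons] at *
    split_ifs <;> omega

lemma count_succ_eq_of_sortFn_eq (h : sortFn ms = sortFn ms') (t : ℕ) :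
    ms.count (t + 1) = ms'.count (t + 1) := by
  have hc := congrFun (numGT_eq_of_sortFn_eq h)
  have := count_succ_add_numGT_succ ms t
  have := count_succ_add_numGT_succ ms' t
  have := hc t
  have := hc (t + 1)
  omega

lemma sortFn_map_finset {f : ℕ → ℕ} (hf : Antitone f) {P : Finset ℕ}
    (hP : ∀ i, f i ≠ 0 → i ∈ P) : sortFn (P.val.map f) = f := by
  refine sortFn_eq_of_lt_iff fun i t => ?_
  have hcount : numGT (P.val.map f) t = #{j ∈ P | t < f j} := by
    rw [numGT, Multiset.countP_map, card_def, filter_val]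
  rw [hcount]
  constructor
  · intro hti
    have hsub : range (i + 1) ⊆ {j ∈ P | t < f j} := fun j hj => by
      have htj : t < f j := hti.trans_le (hf (Nat.lt_succ_iff.mp (mem_range.mp hj)))
      exact mem_filter.mpr ⟨hP j (by omega), htj⟩
    simpa using card_le_card hsub
  · intro hi
    by_contra! hfi
    have hsub : {j ∈ P | t < f j} ⊆ range i := fun j hj => by
      have htj := (mem_filter.mp hj).2
      by_contra hji
      have := hf (not_lt.mp (mt mem_range.mpr hji))
      omega
    simpa using (card_le_card hsub).trans_lt' hi

end SortFn

lemma numGT_add (ms ms' : Multiset ℕ) (t : ℕ) :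
    numGT (ms + ms') t = numGT ms t + numGT ms' t :=
  Multiset.countP_add _ _ _

lemma numGT_map_succ (A : Multiset ℕ) (t : ℕ) :
    numGT (A.map (· + 1)) t = numGT A t + A.count t := by
  induction A using Multiset.induction with
  | empty => simp [numGT]
  | cons x s ih =>
    simp only [numGT, Multiset.map_cons, Multiset.count_cons, Multiset.countP_cons] at *
    split_ifs <;> omega

lemma numGT_map_succ_succ (A : Multiset ℕ) (t : ℕ) :
    numGT (A.map (· + 1)) (t + 1) = numGT A t := by
  rw [numGT, numGT, Multiset.countP_map, Multiset.countP_eq_card_filter]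
  simp

lemma count_map_succ_succ (A : Multiset ℕ) (t : ℕ) :
    (A.map (· + 1)).count (t + 1) = A.count t :=
  Multiset.count_map_eq_count' _ A (add_left_injective 1) t

/-- If `A - A'` is invariant under the shift `t ↦ t + 1`, it vanishes, since `A` and `A'` are
finite. -/
lemma Multiset.eq_of_count_add_count_succ {A A' : Multiset ℕ}
    (h : ∀ t, A.count t + A'.count (t + 1) = A'.count t + A.count (t + 1)) : A = A' := by
  ext t
  have shift : ∀ k, A.count t + A'.count (t + k) = A'.count t + A.count (t + k) := by
    intro k
    induction k with
    | zero => rw [Nat.add_zero, add_comm]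
    | succ k ih =>
      have := h (t + k)
      rw [← add_assoc]
      omega
  have hfar : ∀ B : Multiset ℕ, B.sum < t + (A.sum + A'.sum + 1) →
      B.count (t + (A.sum + A'.sum + 1)) = 0 := fun B hB =>
    Multiset.count_eq_zero.mpr fun hmem => (Multiset.le_sum_of_mem hmem).not_gt hB
  have := shift (A.sum + A'.sum + 1)
  rw [hfar A (by omega), hfar A' (by omega)] at this
  omega

lemma horizStrip_iff {lam mu : ℕ → ℕ} (hlam : Antitone lam) (hmu : Antitone mu) :
    HorizStrip lam mu ↔ ∀ i, mu (i + 1) ≤ lam i := by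
  constructor
  · intro h i
    by_contra! hi
    have c₁ : SkewCell lam mu i (lam i) := ⟨le_rfl, hi.trans_le (hmu (Nat.le_succ i))⟩
    have c₂ : SkewCell lam mu (i + 1) (lam i) := ⟨hlam (Nat.le_succ i), hi⟩
    exact absurd (h _ _ _ c₁ c₂) (by omega)
  · intro h j
    have key : ∀ i i', i < i' → SkewCell lam mu i j → ¬ SkewCell lam mu i' j :=
      fun i i' hii' ⟨hi, _⟩ ⟨_, hi'⟩ => by
        have := hmu (show i + 1 ≤ i' from hii')
        have := h i
        omega
    intro i i' c c'
    by_contra hne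
    rcases Nat.lt_or_gt_of_ne hne with hlt | hgt
    · exact key i i' hlt c c'
    · exact key i' i hgt c' c

lemma isRookStrip_sortFn {A : Multiset ℕ} (hA : A.Nodup) (S : Multiset ℕ) :
    IsRookStrip (sortFn (A + S)) (sortFn (A.map (· + 1) + S)) (Multiset.card A) := by
  have hle (i : ℕ) : sortFn (A + S) i ≤ sortFn (A.map (· + 1) + S) i := by
    simpa using sortFn_add_le_add (a := 0) (b := 0) (fun t => by
      simp only [Nat.add_zero, numGT_add, numGT_map_succ]; omega) i
  refine ⟨isPartitionFn_sortFn _, isPartitionFn_sortFn _, hle, ?_, ?_, ?_⟩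
  · refine (horizStrip_iff (sortFn_antitone _) (sortFn_antitone _)).mpr fun i => ?_
    simpa using sortFn_add_le_add (a := 0) (b := 1) (fun t => by
      have := Multiset.nodup_iff_count_le_one.mp hA t
      simp only [Nat.add_zero, numGT_add, numGT_map_succ]; omega) i
  · intro i
    simpa using sortFn_add_le_add (a := 1) (b := 0) (fun t => by
      have := count_succ_add_numGT_succ S t
      simp only [numGT_add, numGT_map_succ_succ]; omega) i
  · set N := Multiset.card (A + S)
    have hcard : Multiset.card (A.map (· + 1) + S) = N := by simp [N]
    have hsupp : Function.support (fun i => sortFn (A.map (· + 1) + S) i - sortFn (A + S) i)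
        ⊆ range N := fun i hi => by
      by_contra hiN
      exact hi (by simp [sortFn_eq_zero (hcard ▸ not_lt.mp (mt mem_range.mpr hiN))])
    rw [finsum_eq_sum_of_support_subset _ hsupp, sum_tsub_distrib _ fun i _ => hle i,
      sum_range_sortFn hcard.le, sum_range_sortFn le_rfl]
    simp [Multiset.sum_map_add]
    omega

lemma eq_of_sortFn_eq_of_sortFn_map_succ_eq {A A' S S' : Multiset ℕ} (hS : 0 ∉ S)
    (hS' : 0 ∉ S') (hstar : sortFn (A + S) = sortFn (A' + S'))
    (hcirc : sortFn (A.map (· + 1) + S) = sortFn (A'.map (· + 1) + S')) : A = A' ∧ S = S' := by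
  have h₁ (t : ℕ) := count_succ_eq_of_sortFn_eq hstar t
  have h₂ (t : ℕ) := count_succ_eq_of_sortFn_eq hcirc t
  simp only [Multiset.count_add, count_map_succ_succ] at h₁ h₂
  have hA : A = A' := Multiset.eq_of_count_add_count_succ fun t => by
    have := h₁ t
    have := h₂ t
    omega
  refine ⟨hA, Multiset.ext.mpr fun t => ?_⟩
  cases t with
  | zero => rw [Multiset.count_eq_zero.mpr hS, Multiset.count_eq_zero.mpr hS']
  | succ t =>
    have := h₁ t
    rw [hA] at this
    omega

lemma exists_strictAnti_ofFn_eq {M : Multiset ℕ} (hM : M.Nodup) {m : ℕ}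
    (hm : Multiset.card M = m) :
    ∃ a : Fin m → ℕ, (∀ ⦃i j : Fin m⦄, i < j → a j < a i) ∧ (List.ofFn a : Multiset ℕ) = M := by
  subst hm
  set L := M.sort (· ≥ ·)
  have hL : L.length = Multiset.card M := Multiset.length_sort _
  have hLnodup : L.Nodup := by rw [← Multiset.coe_nodup, Multiset.sort_eq]; exact hM
  have hLgt : L.Pairwise (· > ·) :=
    ((Multiset.pairwise_sort M _).and hLnodup).imp fun ⟨hge, hne⟩ => lt_of_le_of_ne hge hne.symm
  refine ⟨fun k => L.get (Fin.cast hL.symm k),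
    fun i j hij => List.pairwise_iff_get.mp hLgt _ _ hij, ?_⟩
  rw [← List.ofFn_congr hL L.get, List.ofFn_get, Multiset.sort_eq]

lemma finsum_sub_eq_card_filter {lam mu : ℕ → ℕ} (hle : ∀ i, lam i ≤ mu i)
    (hv : VertStrip lam mu) {P : Finset ℕ} (hP : ∀ i, mu i ≠ 0 → i ∈ P) :
    ∑ᶠ i, (mu i - lam i) = #{i ∈ P | lam i < mu i} := by
  have hsupp : Function.support (fun i => mu i - lam i) ⊆ P := fun i hi =>
    hP i (by simp only [Function.mem_support] at hi; omega)
  rw [finsum_eq_sum_of_support_subset _ hsupp, card_filter]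
  refine sum_congr rfl fun i _ => ?_
  have := hv i
  have := hle i
  split_ifs <;> omega

lemma nodup_map_filter_lt {lam mu : ℕ → ℕ} (hmu : Antitone mu)
    (hborder : ∀ i, mu (i + 1) ≤ lam i) (P : Finset ℕ) :
    ({i ∈ P | lam i < mu i}.val.map lam).Nodup := by
  have hanti {i j : ℕ} (hij : i < j) (hj : lam j < mu j) : lam j < lam i := by
    have := hmu (show i + 1 ≤ j from hij)
    have := hborder i
    omega
  refine (filter _ P).nodup.map_on fun i hi j hj hij => ?_
  by_contra hne
  rcases Nat.lt_or_gt_of_ne hne with hlt | hgt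
  · exact (hanti hlt (mem_filter.mp hj).2).ne hij.symm
  · exact (hanti hgt (mem_filter.mp hi).2).ne hij

namespace SuperPartition

variable {m : ℕ} (Λ : SuperPartition m)

def aMultiset : Multiset ℕ := ↑(List.ofFn Λ.a)

def sMultiset : Multiset ℕ := ↑Λ.s

lemma starFn_eq : Λ.starFn = sortFn (Λ.aMultiset + Λ.sMultiset) := rfl

lemma circFn_eq : Λ.circFn = sortFn (Λ.aMultiset.map (· + 1) + Λ.sMultiset) := by
  rw [circFn, aMultiset, Multiset.map_coe, List.map_ofFn]
  rfl

lemma aMultiset_nodup : Λ.aMultiset.Nodup :=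
  Multiset.coe_nodup.mpr (List.nodup_ofFn.mpr fun i j hij => by
    by_contra hne
    rcases lt_or_gt_of_ne hne with h | h
    · exact (Λ.a_strictAnti h).ne hij.symm
    · exact (Λ.a_strictAnti h).ne hij)

lemma card_aMultiset : Multiset.card Λ.aMultiset = m := by simp [aMultiset]

lemma zero_notMem_sMultiset : 0 ∉ Λ.sMultiset := fun h => lt_irrefl 0 (Λ.s_pos 0 h)

lemma isRookStrip_starFn_circFn : IsRookStrip Λ.starFn Λ.circFn m := by
  have := isRookStrip_sortFn Λ.aMultiset_nodup Λ.sMultiset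
  rwa [card_aMultiset, ← starFn_eq, ← circFn_eq] at this

lemma ext_multiset {Λ Λ' : SuperPartition m} (ha : Λ.aMultiset = Λ'.aMultiset)
    (hs : Λ.sMultiset = Λ'.sMultiset) : Λ = Λ' := by
  obtain ⟨a, ha_anti, s, hs_sorted, _⟩ := Λ
  obtain ⟨a', ha'_anti, s', hs'_sorted, _⟩ := Λ'
  have hpair (f : Fin m → ℕ) (hf : ∀ ⦃i j : Fin m⦄, i < j → f j < f i) :
      (List.ofFn f).Pairwise (· > ·) := List.pairwise_ofFn.mpr fun _ _ hij => hf hij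
  obtain rfl : a = a' := List.ofFn_injective <|
    (Multiset.coe_eq_coe.mp ha).eq_of_pairwise' (hpair a ha_anti) (hpair a' ha'_anti)
  obtain rfl : s = s' := (Multiset.coe_eq_coe.mp hs).eq_of_pairwise' hs_sorted hs'_sorted
  rfl

lemma eq_of_starFn_eq_of_circFn_eq {Λ Λ' : SuperPartition m} (hstar : Λ.starFn = Λ'.starFn)
    (hcirc : Λ.circFn = Λ'.circFn) : Λ = Λ' := by
  rw [starFn_eq, starFn_eq] at hstar
  rw [circFn_eq, circFn_eq] at hcirc
  obtain ⟨ha, hs⟩ := eq_of_sortFn_eq_of_sortFn_map_succ_eq Λ.zero_notMem_sMultiset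
    Λ'.zero_notMem_sMultiset hstar hcirc
  exact ext_multiset ha hs

lemma exists_of_isRookStrip {lam mu : ℕ → ℕ} (h : IsRookStrip lam mu m) :
    ∃ Λ : SuperPartition m, Λ.starFn = lam ∧ Λ.circFn = mu := by
  obtain ⟨hlam, hmu, hle, hh, hv, hsum⟩ := h
  obtain ⟨N, hN⟩ := hmu.2
  set P := {i ∈ range N | 0 < mu i}
  have hP (i : ℕ) (hi : mu i ≠ 0) : i ∈ P :=
    mem_filter.mpr ⟨mem_range.mpr (by by_contra hiN; exact hi (hN i (not_lt.mp hiN))),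
      Nat.pos_of_ne_zero hi⟩
  set T := {i ∈ P | lam i < mu i}
  set Q := {i ∈ P | ¬ lam i < mu i}
  have hPTQ (f : ℕ → ℕ) : T.val.map f + Q.val.map f = P.val.map f := by
    rw [← Multiset.map_add]
    exact congrArg _ (Multiset.filter_add_not _ P.val)
  obtain ⟨a, ha, haT⟩ := exists_strictAnti_ofFn_eq (m := m)
    (nodup_map_filter_lt hmu.1 ((horizStrip_iff hlam.1 hmu.1).mp hh) P)
    (by rw [Multiset.card_map, ← card_def, ← hsum, finsum_sub_eq_card_filter hle hv hP])
  have hs_pos (x : ℕ) (hx : x ∈ (Q.val.map lam).sort (· ≥ ·)) : 0 < x := by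
    obtain ⟨i, hi, rfl⟩ := Multiset.mem_map.mp ((Multiset.mem_sort _).mp hx)
    obtain ⟨hiP, hi⟩ := mem_filter.mp (mem_def.mpr hi)
    have := (mem_filter.mp hiP).2
    omega
  let Λ : SuperPartition m := ⟨a, ha, _, Multiset.pairwise_sort _ _, hs_pos⟩
  have haM : Λ.aMultiset = T.val.map lam := haT
  have hsM : Λ.sMultiset = Q.val.map lam := Multiset.sort_eq (Q.val.map lam) (· ≥ ·)
  refine ⟨Λ, ?_, ?_⟩
  · rw [Λ.starFn_eq, haM, hsM, hPTQ]
    exact sortFn_map_finset hlam.1 fun i hi => hP i (by have := hle i; omega)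
  · have hTmu : (T.val.map lam).map (· + 1) = T.val.map mu := by
      rw [Multiset.map_map]
      refine Multiset.map_congr rfl fun i hi => ?_
      have := (mem_filter.mp (mem_def.mpr hi)).2
      have := hv i
      simp only [Function.comp_apply]
      omega
    have hQmu : Q.val.map lam = Q.val.map mu := Multiset.map_congr rfl fun i hi => by
      have := (mem_filter.mp (mem_def.mpr hi)).2
      have := hle i
      omega
    rw [Λ.circFn_eq, haM, hsM, hTmu, hQmu, hPTQ]
    exact sortFn_map_finset hmu.1 hP

end SuperPartition

/-- the map `Λ ↦ (Λ*, Λ^⊛)` is a bijection from superpartitions of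
fermionic degree `m` onto the pairs of partitions `(λ, μ)` with `λ ⊆ μ` such that
`μ/λ` is both a horizontal and a vertical strip, of total size `m`. -/
theorem stmt0 (m : ℕ) :
    Set.BijOn (fun Λ : SuperPartition m => (Λ.starFn, Λ.circFn)) Set.univ
      {p : (ℕ → ℕ) × (ℕ → ℕ) |
        IsPartitionFn p.1 ∧ IsPartitionFn p.2 ∧ (∀ i, p.1 i ≤ p.2 i) ∧
        HorizStrip p.1 p.2 ∧ VertStrip p.1 p.2 ∧ (∑ᶠ i, (p.2 i - p.1 i)) = m} := by
  refine ⟨fun Λ _ => Λ.isRookStrip_starFn_circFn, fun Λ _ Λ' _ h => ?_, fun p hp => ?_⟩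
  · exact SuperPartition.eq_of_starFn_eq_of_circFn_eq (congrArg Prod.fst h) (congrArg Prod.snd h)
  · obtain ⟨Λ, hstar, hcirc⟩ := SuperPartition.exists_of_isRookStrip hp
    exact ⟨Λ, trivial, Prod.ext hstar hcirc⟩
end

section
/- Conjugation of superpartitions, defined by Λ' = ((Λ*)', (Λ^⊛)') in the (Λ*, Λ^⊛) description, is a well-defined involution on superpartitions (i.e., the pair ((Λ*)', (Λ^⊛)') is again a valid superpartition of the same fermionic degree, and (Λ')' = Λ), and it reverses the dominance order: Λ ≤ Ω if and only if Ω' ≤ Λ'. -/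
/-- The conjugate (transpose) of a partition function. -/
noncomputable def conjFn (f : ℕ → ℕ) : ℕ → ℕ := fun i => Set.ncard {j : ℕ | i < f j}

/-- `(lam, mu)` is the `(Λ*, Λ^⊛)` description of a superpartition of fermionic
degree `m`. -/
def IsSuperPair (m : ℕ) (lam mu : ℕ → ℕ) : Prop :=
  IsPartitionFn lam ∧ IsPartitionFn mu ∧ (∀ i, lam i ≤ mu i) ∧
  HorizStrip lam mu ∧ VertStrip lam mu ∧ (∑ᶠ i, (mu i - lam i)) = m

/-- `f ≤ g` in dominance order (same size, and partial sums of `g` dominate). -/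
def DomLe (f g : ℕ → ℕ) : Prop :=
  (∑ᶠ i, f i = ∑ᶠ i, g i) ∧
  ∀ k, ∑ i ∈ Finset.range k, f i ≤ ∑ i ∈ Finset.range k, g i

open Finset

theorem finsum_eq_sum_range_of_forall_ge {f : ℕ → ℕ} {M : ℕ} (hM : ∀ i, M ≤ i → f i = 0) :
    ∑ᶠ i, f i = ∑ i ∈ range M, f i :=
  finsum_eq_sum_of_support_subset f fun i hi => by
    by_contra hiM
    exact hi (hM i (by simpa using hiM))

theorem sum_range_min_add_sum_range_le (g : ℕ → ℕ) {r M : ℕ} (hrM : r ≤ M) (k : ℕ) :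
    ∑ i ∈ range M, min (g i) k + ∑ i ∈ range r, g i ≤ r * k + ∑ i ∈ range M, g i := by
  rw [← sum_range_add_sum_Ico _ hrM, ← sum_range_add_sum_Ico g hrM]
  have hhead : ∑ i ∈ range r, min (g i) k ≤ r * k := by
    simpa using sum_le_card_nsmul (range r) _ k fun i _ => min_le_right (g i) k
  have htail : ∑ i ∈ Ico r M, min (g i) k ≤ ∑ i ∈ Ico r M, g i :=
    sum_le_sum fun i _ => min_le_left (g i) k
  omega

theorem conjFn_eq_card_filter {f : ℕ → ℕ} {M : ℕ} (hM : ∀ i, M ≤ i → f i = 0)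
    (j : ℕ) : conjFn f j = #{i ∈ range M | j < f i} := by
  rw [conjFn, ← Set.ncard_coe_finset]
  congr 1
  ext i
  simp only [Set.mem_ofPred_eq, coe_filter, mem_range, iff_and_self]
  intro hi
  by_contra hiM
  rw [hM i (by omega)] at hi
  omega

theorem sum_range_conjFn {f : ℕ → ℕ} {M : ℕ} (hM : ∀ i, M ≤ i → f i = 0) (k : ℕ) :
    ∑ j ∈ range k, conjFn f j = ∑ i ∈ range M, min (f i) k := by
  induction k with
  | zero => simp
  | succ k ih =>
    rw [sum_range_succ, ih, conjFn_eq_card_filter hM, card_filter, ← sum_add_distrib]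
    refine sum_congr rfl fun i _ => ?_
    split_ifs <;> omega

namespace IsPartitionFn

variable {f g : ℕ → ℕ}

theorem setOf_lt_eq_Iio (hf : IsPartitionFn f) (i : ℕ) : ∃ c, {j | i < f j} = Set.Iio c := by
  obtain ⟨hanti, N, hN⟩ := hf
  have hex : ∃ j, f j ≤ i := ⟨N, by simp [hN N le_rfl]⟩
  refine ⟨Nat.find hex, Set.ext fun j => ?_⟩
  simp only [Set.mem_ofPred_eq, Set.mem_Iio, Nat.lt_find_iff, not_le]
  exact ⟨fun hj k hk => hj.trans_le (hanti hk), fun h => h j le_rfl⟩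

theorem lt_conjFn_iff (hf : IsPartitionFn f) {i j : ℕ} : j < conjFn f i ↔ i < f j := by
  obtain ⟨c, hc⟩ := hf.setOf_lt_eq_Iio i
  have hconj : conjFn f i = c := by
    simp only [conjFn, hc, Set.ncard_Iio_nat]
  rw [hconj, ← Set.mem_Iio, ← hc, Set.mem_ofPred_eq]

theorem conjFn_le_iff (hf : IsPartitionFn f) {i j : ℕ} : conjFn f i ≤ j ↔ f j ≤ i := by
  simpa only [not_lt] using hf.lt_conjFn_iff.not

theorem conjFn_eq_zero (hf : IsPartitionFn f) {i : ℕ} (hi : f 0 ≤ i) : conjFn f i = 0 :=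
  Nat.le_zero.1 (hf.conjFn_le_iff.2 hi)

protected theorem conjFn (hf : IsPartitionFn f) : IsPartitionFn (conjFn f) :=
  ⟨fun _ _ hij => le_of_forall_lt fun _ hc =>
      hf.lt_conjFn_iff.2 (hij.trans_lt (hf.lt_conjFn_iff.1 hc)),
    f 0, fun _ hi => hf.conjFn_eq_zero hi⟩

theorem conjFn_conjFn (hf : IsPartitionFn f) : conjFn (conjFn f) = f :=
  funext fun i => eq_of_forall_lt_iff fun j => by
    rw [hf.conjFn.lt_conjFn_iff, hf.lt_conjFn_iff]

theorem finsum_conjFn (hf : IsPartitionFn f) : ∑ᶠ i, conjFn f i = ∑ᶠ i, f i := by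
  obtain ⟨N, hN⟩ := hf.2
  rw [finsum_eq_sum_range_of_forall_ge fun _ hi => hf.conjFn_eq_zero hi,
    finsum_eq_sum_range_of_forall_ge hN, sum_range_conjFn hN]
  exact sum_congr rfl fun i _ => min_eq_left (hf.1 (Nat.zero_le i))

theorem sum_range_min_add_sum_range_conjFn (hf : IsPartitionFn f) {k M : ℕ}
    (hM : conjFn f k ≤ M) :
    ∑ i ∈ range M, min (f i) k + ∑ i ∈ range (conjFn f k), f i =
      conjFn f k * k + ∑ i ∈ range M, f i := by
  rw [← sum_range_add_sum_Ico _ hM, ← sum_range_add_sum_Ico f hM]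
  have hhead : ∑ i ∈ range (conjFn f k), min (f i) k = conjFn f k * k := by
    rw [sum_congr rfl fun i hi => min_eq_right (hf.lt_conjFn_iff.1 (mem_range.1 hi)).le]
    simp
  have htail : ∑ i ∈ Ico (conjFn f k) M, min (f i) k = ∑ i ∈ Ico (conjFn f k) M, f i :=
    sum_congr rfl fun i hi => min_eq_left (hf.conjFn_le_iff.1 (mem_Ico.1 hi).1)
  omega

end IsPartitionFn

protected theorem DomLe.conjFn {f g : ℕ → ℕ} (hf : IsPartitionFn f) (hg : IsPartitionFn g)
    (h : DomLe f g) : DomLe (conjFn g) (conjFn f) := by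
  refine ⟨by rw [hg.finsum_conjFn, hf.finsum_conjFn, h.1], fun k => ?_⟩
  obtain ⟨Nf, hNf⟩ := hf.2
  obtain ⟨Ng, hNg⟩ := hg.2
  obtain ⟨M, hNfM, hNgM, hrM⟩ : ∃ M, Nf ≤ M ∧ Ng ≤ M ∧ conjFn f k ≤ M :=
    ⟨Nf + Ng + conjFn f k, by omega, by omega, by omega⟩
  have hMf : ∀ i, M ≤ i → f i = 0 := fun i hi => hNf i (hNfM.trans hi)
  have hMg : ∀ i, M ≤ i → g i = 0 := fun i hi => hNg i (hNgM.trans hi)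
  have hsize : ∑ i ∈ range M, f i = ∑ i ∈ range M, g i := by
    rw [← finsum_eq_sum_range_of_forall_ge hMf, ← finsum_eq_sum_range_of_forall_ge hMg, h.1]
  rw [sum_range_conjFn hMg, sum_range_conjFn hMf]
  have hg_le := sum_range_min_add_sum_range_le g hrM k
  have hf_eq := hf.sum_range_min_add_sum_range_conjFn hrM
  have hhead := h.2 (conjFn f k)
  omega

theorem domLe_conjFn_iff {f g : ℕ → ℕ} (hf : IsPartitionFn f) (hg : IsPartitionFn g) :
    DomLe (conjFn g) (conjFn f) ↔ DomLe f g :=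
  ⟨fun h => by simpa only [hf.conjFn_conjFn, hg.conjFn_conjFn] using h.conjFn hg.conjFn hf.conjFn,
    DomLe.conjFn hf hg⟩

section Strips

variable {lam mu : ℕ → ℕ} (hlam : IsPartitionFn lam) (hmu : IsPartitionFn mu)
include hlam hmu

theorem skewCell_conjFn_iff {i j : ℕ} :
    SkewCell (conjFn lam) (conjFn mu) i j ↔ SkewCell lam mu j i := by
  rw [SkewCell, SkewCell, hlam.conjFn_le_iff, hmu.lt_conjFn_iff]

theorem VertStrip.horizStrip_conjFn (hV : VertStrip lam mu) :
    HorizStrip (conjFn lam) (conjFn mu) := by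
  intro j i i' hi hi'
  rw [skewCell_conjFn_iff hlam hmu] at hi hi'
  have := hV j
  unfold SkewCell at hi hi'
  omega

theorem HorizStrip.vertStrip_conjFn (hH : HorizStrip lam mu) :
    VertStrip (conjFn lam) (conjFn mu) := by
  intro i
  by_contra! hwide
  have h₀ : SkewCell (conjFn lam) (conjFn mu) i (conjFn lam i) := ⟨le_rfl, by omega⟩
  have h₁ : SkewCell (conjFn lam) (conjFn mu) i (conjFn lam i + 1) := ⟨by omega, by omega⟩
  rw [skewCell_conjFn_iff hlam hmu] at h₀ h₁
  have := hH i _ _ h₀ h₁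
  omega

theorem conjFn_le_conjFn (hle : ∀ i, lam i ≤ mu i) (i : ℕ) : conjFn lam i ≤ conjFn mu i :=
  le_of_forall_lt fun j hj => hmu.lt_conjFn_iff.2 ((hlam.lt_conjFn_iff.1 hj).trans_le (hle j))

theorem finsum_tsub (hle : ∀ i, lam i ≤ mu i) :
    ∑ᶠ i, (mu i - lam i) = ∑ᶠ i, mu i - ∑ᶠ i, lam i := by
  obtain ⟨Nl, hNl⟩ := hlam.2
  obtain ⟨Nm, hNm⟩ := hmu.2
  have hMl : ∀ i, max Nl Nm ≤ i → lam i = 0 := fun i hi => hNl i (by omega)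
  have hMm : ∀ i, max Nl Nm ≤ i → mu i = 0 := fun i hi => hNm i (by omega)
  rw [finsum_eq_sum_range_of_forall_ge fun i hi => by rw [hMm i hi, zero_tsub],
    finsum_eq_sum_range_of_forall_ge hMl, finsum_eq_sum_range_of_forall_ge hMm,
    sum_tsub_distrib _ fun i _ => hle i]

end Strips

protected theorem IsSuperPair.conjFn {m : ℕ} {lam mu : ℕ → ℕ} (h : IsSuperPair m lam mu) :
    IsSuperPair m (conjFn lam) (conjFn mu) := by
  obtain ⟨hlam, hmu, hle, hH, hV, hdeg⟩ := h
  have hle' := conjFn_le_conjFn hlam hmu hle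
  refine ⟨hlam.conjFn, hmu.conjFn, hle', hV.horizStrip_conjFn hlam hmu,
    hH.vertStrip_conjFn hlam hmu, ?_⟩
  rw [finsum_tsub hlam.conjFn hmu.conjFn hle', hlam.finsum_conjFn, hmu.finsum_conjFn,
    ← finsum_tsub hlam hmu hle, hdeg]

/-- conjugation `Λ' = ((Λ*)', (Λ^⊛)')` is a well-defined involution on
superpartitions (of the same fermionic degree) reversing the dominance order. -/
theorem stmt5 (m : ℕ) (lam mu : ℕ → ℕ) (h : IsSuperPair m lam mu) :
    IsSuperPair m (conjFn lam) (conjFn mu) ∧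
    conjFn (conjFn lam) = lam ∧ conjFn (conjFn mu) = mu ∧
    (∀ lam' mu', IsSuperPair m lam' mu' →
      ((DomLe lam lam' ∧ DomLe mu mu') ↔
        (DomLe (conjFn lam') (conjFn lam) ∧ DomLe (conjFn mu') (conjFn mu)))) := by
  have ⟨hlam, hmu, _⟩ := h
  refine ⟨h.conjFn, hlam.conjFn_conjFn, hmu.conjFn_conjFn, fun lam' mu' h' => ?_⟩
  rw [domLe_conjFn_iff hlam h'.1, domLe_conjFn_iff hmu h'.2.1]
end

section
/- For N ≥ 1 and with A_i(t) = ∏_{j≠i} (t x_i - x_j)/(x_i - x_j), the identity Σ_{i=1}^N A_i(t) = 1 + t + t^2 + ... + t^{N-1} holds as an identity of rational functions in x_1,...,x_N, t (in particular the left-hand side, a priori a rational function with poles, is a constant polynomial in the x variables). -/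
open Polynomial Finset


/-- The field `ℚ(t)(x_1,…,x_N)` of rational functions. -/
abbrev KK (N : ℕ) := FractionRing (MvPolynomial (Fin N) (RatFunc ℚ))

/-- The variable `x_j` as an element of `ℚ(t)(x_1,…,x_N)`. -/
noncomputable def xx (N : ℕ) (j : Fin N) : KK N :=
  algebraMap (MvPolynomial (Fin N) (RatFunc ℚ)) (KK N) (MvPolynomial.X j)

/-- The parameter `t` as an element of `ℚ(t)(x_1,…,x_N)`. -/
noncomputable def tt (N : ℕ) : KK N :=
  algebraMap (MvPolynomial (Fin N) (RatFunc ℚ)) (KK N) (MvPolynomial.C RatFunc.X)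

/-- with `A_i(t) = ∏_{j≠i} (t x_i - x_j)/(x_i - x_j)`, one has
`Σ_{i=1}^N A_i(t) = 1 + t + ⋯ + t^{N-1}` in `ℚ(t)(x_1,…,x_N)`. -/
theorem stmt15 (N : ℕ) (hN : 1 ≤ N) :
    ∑ i : Fin N, ∏ j ∈ Finset.univ.erase i,
        ((tt N * xx N i - xx N j) / (xx N i - xx N j))
      = ∑ k ∈ Finset.range N, tt N ^ k := by
  have halg : Function.Injective (algebraMap (MvPolynomial (Fin N) (RatFunc ℚ)) (KK N)) :=
    IsFractionRing.injective _ _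
  set x : Fin N → KK N := xx N with hxdef
  set t : KK N := tt N with htdef
  have hinj : Function.Injective x := fun a b h =>
    MvPolynomial.X_injective (halg h)
  have hxne : ∀ ⦃i j : Fin N⦄, i ≠ j → x i - x j ≠ 0 := fun i j h => by
    rw [sub_ne_zero]; exact fun e => h (hinj e)
  have hx0 : ∀ i, x i ≠ 0 := fun i => by
    rw [hxdef, xx, Ne, ← map_zero (algebraMap (MvPolynomial (Fin N) (RatFunc ℚ)) (KK N))]
    intro h
    exact MvPolynomial.X_ne_zero i (halg h)
  have ht1 : t ≠ 1 := by
    rw [htdef, tt, Ne, ← map_one (algebraMap (MvPolynomial (Fin N) (RatFunc ℚ)) (KK N))]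
    intro h
    have h2 : (RatFunc.X : RatFunc ℚ) = 1 := by
      have := halg h
      rwa [← MvPolynomial.C_1, (MvPolynomial.C_injective (Fin N) (RatFunc ℚ)).eq_iff] at this
    have h3 : (Polynomial.X : Polynomial ℚ) = 1 := by
      apply RatFunc.algebraMap_injective ℚ
      rw [RatFunc.algebraMap_X, h2, map_one]
    simpa using congrArg natDegree h3
  have ht0 : t ≠ 0 := by
    rw [htdef, tt, Ne, ← map_zero (algebraMap (MvPolynomial (Fin N) (RatFunc ℚ)) (KK N))]
    intro h
    have h2 : (RatFunc.X : RatFunc ℚ) = 0 := by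
      have := halg h
      rwa [← MvPolynomial.C_0, (MvPolynomial.C_injective (Fin N) (RatFunc ℚ)).eq_iff] at this
    exact RatFunc.X_ne_zero h2
  have ht1' : t - 1 ≠ 0 := sub_ne_zero.mpr ht1
  -- the polynomial
  set P : Polynomial (KK N) := ∏ j : Fin N, (C t * X - C (x j)) with hP
  set Q : Polynomial (KK N) := ∏ j : Fin N, (X - C (x j)) with hQ
  set f : Polynomial (KK N) := P - C (t ^ N) * Q with hf
  have hcard : (univ : Finset (Fin N)).card = N := by simp
  have hdeg : f.degree < ((univ : Finset (Fin N)).card : ℕ) := by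
    set R : Polynomial (KK N) := ∏ j : Fin N, (X - C (x j / t)) with hR
    have hCt : (C (t ^ N) : Polynomial (KK N)) = ∏ _j : Fin N, C t := by
      rw [prod_const, hcard, C_pow]
    have hPP : P = C (t ^ N) * R := by
      rw [hP, hCt, hR, ← prod_mul_distrib]
      apply prod_congr rfl
      intro j _
      rw [mul_sub, ← C_mul, mul_div_cancel₀ _ ht0]
    have hRmonic : R.Monic := monic_prod_of_monic _ _ fun j _ => monic_X_sub_C _
    have hQmonic : Q.Monic := monic_prod_of_monic _ _ fun j _ => monic_X_sub_C _
    have hRdeg : R.natDegree = N := by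
      rw [hR, natDegree_prod_of_monic _ _ fun j _ => monic_X_sub_C _]
      simp
    have hQdeg : Q.natDegree = N := by
      rw [hQ, natDegree_prod_of_monic _ _ fun j _ => monic_X_sub_C _]
      simp
    have hRd : R.degree = (N : WithBot ℕ) := by
      rw [degree_eq_natDegree hRmonic.ne_zero, hRdeg]
    have hQd : Q.degree = (N : WithBot ℕ) := by
      rw [degree_eq_natDegree hQmonic.ne_zero, hQdeg]
    have hsub : (R - Q).degree < N := by
      have := degree_sub_lt (p := R) (q := Q) (by rw [hRd, hQd]) (hRmonic.ne_zero)
        (by rw [hRmonic.leadingCoeff, hQmonic.leadingCoeff])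
      rwa [hRd] at this
    have hfe : f = C (t ^ N) * (R - Q) := by rw [hf, hPP, mul_sub]
    rw [hfe, hcard, degree_C_mul (pow_ne_zero _ ht0)]
    exact hsub
  have hvs : Set.InjOn x ↑(univ : Finset (Fin N)) := hinj.injOn
  have hLag := Lagrange.eq_interpolate hvs hdeg
  set S : KK N := ∑ i : Fin N, ∏ j ∈ Finset.univ.erase i,
      ((t * x i - x j) / (x i - x j)) with hS
  have h0 := congrArg (Polynomial.eval 0) hLag
  rw [Lagrange.interpolate_apply, eval_finset_sum] at h0
  have hfev : ∀ i : Fin N, eval (x i) f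
      = (t * x i - x i) * ∏ j ∈ univ.erase i, (t * x i - x j) := by
    intro i
    have hQ0 : eval (x i) Q = 0 := by
      rw [hQ, eval_prod]
      exact prod_eq_zero (mem_univ i) (by simp)
    rw [hf, eval_sub, eval_mul, hQ0, mul_zero, sub_zero, hP, eval_prod]
    simp only [eval_sub, eval_mul, eval_C, eval_X]
    rw [← mul_prod_erase univ _ (mem_univ i)]
  have hbev : ∀ i : Fin N, eval 0 (Lagrange.basis univ x i)
      = ∏ j ∈ univ.erase i, ((x i - x j)⁻¹ * (-x j)) := by
    intro i
    rw [Lagrange.basis, eval_prod]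
    apply prod_congr rfl
    intro j _
    simp [Lagrange.basisDivisor]
  have hf0 : eval 0 f = (1 - t ^ N) * ∏ j : Fin N, (-x j) := by
    rw [hf, eval_sub, eval_mul, eval_C, hP, hQ, eval_prod, eval_prod]
    simp only [eval_sub, eval_mul, eval_C, eval_X, mul_zero, zero_sub]
    ring
  simp only [eval_mul, eval_C, hbev, hfev, hf0] at h0
  have hterm : ∀ i : Fin N,
      (t * x i - x i) * (∏ j ∈ univ.erase i, (t * x i - x j)) *
        (∏ j ∈ univ.erase i, ((x i - x j)⁻¹ * (-x j)))
      = (1 - t) * (∏ j : Fin N, (-x j)) *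
        ∏ j ∈ univ.erase i, ((t * x i - x j) / (x i - x j)) := by
    intro i
    have h1 : ∀ j ∈ univ.erase i,
        (t * x i - x j) * ((x i - x j)⁻¹ * (-x j))
        = (-x j) * ((t * x i - x j) / (x i - x j)) := by
      intro j _
      rw [div_eq_mul_inv]; ring
    calc (t * x i - x i) * (∏ j ∈ univ.erase i, (t * x i - x j)) *
          (∏ j ∈ univ.erase i, ((x i - x j)⁻¹ * (-x j)))
        = (t * x i - x i) *
          ∏ j ∈ univ.erase i, ((t * x i - x j) * ((x i - x j)⁻¹ * (-x j))) := by
          rw [mul_assoc, ← prod_mul_distrib]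
      _ = (t * x i - x i) *
          ∏ j ∈ univ.erase i, ((-x j) * ((t * x i - x j) / (x i - x j))) := by
          rw [prod_congr rfl h1]
      _ = (t * x i - x i) * ((∏ j ∈ univ.erase i, (-x j)) *
          ∏ j ∈ univ.erase i, ((t * x i - x j) / (x i - x j))) := by
          rw [prod_mul_distrib]
      _ = (1 - t) * ((-x i) * ∏ j ∈ univ.erase i, (-x j)) *
          ∏ j ∈ univ.erase i, ((t * x i - x j) / (x i - x j)) := by ring
      _ = (1 - t) * (∏ j : Fin N, (-x j)) *
          ∏ j ∈ univ.erase i, ((t * x i - x j) / (x i - x j)) := by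
          rw [mul_prod_erase univ (fun j => -x j) (mem_univ i)]
  rw [sum_congr rfl fun i _ => hterm i, ← mul_sum, ← hS] at h0
  have hPi : (∏ j : Fin N, (-x j)) ≠ 0 :=
    prod_ne_zero_iff.mpr fun j _ => neg_ne_zero.mpr (hx0 j)
  have key : (1 - t ^ N) = (1 - t) * S :=
    mul_right_cancel₀ hPi (by linear_combination h0)
  rw [geom_sum_eq ht1, eq_div_iff ht1']
  linear_combination key
end

section
/- For any superpartition Λ, a cell s = (i,j) of the diagram of Λ is bosonic (i.e., s ∈ BΛ) if and only if the transposed cell s' = (j,i) is a bosonic cell of the conjugate superpartition Λ'. Here BΛ is the set of cells of Λ^⊛ lying in Λ* that are not at the intersection of a fermionic row and a fermionic column. -/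
/-- The cell `(i,j)` (0-indexed) is a bosonic cell of the superpartition with
description `(lam, mu) = (Λ*, Λ^⊛)`: it lies in `Λ*` and is not at the
intersection of a fermionic row and a fermionic column. -/
noncomputable def BCell (lam mu : ℕ → ℕ) (i j : ℕ) : Prop :=
  j < lam i ∧ ¬ (mu i = lam i + 1 ∧ conjFn mu j = conjFn lam j + 1)

lemma lt_conjFn_iff (f : ℕ → ℕ) (hf : IsPartitionFn f) (j i : ℕ) :
    j < f i ↔ i < conjFn f j := by
  obtain ⟨hmono, N, hN⟩ := hf
  have hS : {k : ℕ | j < f k}.Finite := by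
    apply Set.Finite.subset (Set.finite_Iio N)
    intro k hk
    by_contra hkN
    have : f k = 0 := hN k (le_of_not_gt hkN)
    simp [Set.mem_setOf_eq, this] at hk
  constructor
  · intro hji
    have hsub : ((Finset.range (i + 1)) : Set ℕ) ⊆ {k : ℕ | j < f k} := by
      intro k hk
      simp only [Finset.coe_range, Set.mem_Iio] at hk
      exact lt_of_lt_of_le hji (hmono (Nat.lt_succ_iff.mp hk))
    have := Set.ncard_le_ncard hsub hS
    rwa [Set.ncard_coe_finset, Finset.card_range] at this
  · intro hic
    by_contra hji
    have hsub : {k : ℕ | j < f k} ⊆ ((Finset.range i) : Set ℕ) := by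
      intro k hk
      simp only [Finset.coe_range, Set.mem_Iio]
      by_contra hki
      exact hji (lt_of_lt_of_le hk (hmono (le_of_not_gt hki)))
    have := Set.ncard_le_ncard hsub (Finset.finite_toSet _)
    rw [Set.ncard_coe_finset, Finset.card_range] at this
    exact absurd hic (not_lt.mpr this)

lemma conjFn_conjFn (f : ℕ → ℕ) (hf : IsPartitionFn f) (i : ℕ) :
    conjFn (conjFn f) i = f i := by
  have : {j : ℕ | i < conjFn f j} = ((Finset.range (f i)) : Set ℕ) := by
    ext j
    simp [← lt_conjFn_iff f hf j i]
  rw [conjFn, this, Set.ncard_coe_finset, Finset.card_range]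

/-- `(i,j)` is a bosonic cell of `Λ` iff `(j,i)` is a bosonic cell of
the conjugate superpartition `Λ' = ((Λ*)', (Λ^⊛)')`. -/
theorem stmt16 (m : ℕ) (lam mu : ℕ → ℕ) (h : IsSuperPair m lam mu) (i j : ℕ) :
    BCell lam mu i j ↔ BCell (conjFn lam) (conjFn mu) j i := by
  obtain ⟨hlam, hmu, -, -, -, -⟩ := h
  unfold BCell
  rw [lt_conjFn_iff lam hlam j i, conjFn_conjFn lam hlam, conjFn_conjFn mu hmu,
    and_comm (a := mu i = lam i + 1)]
end

section
/- For any superpartition Λ, the product over bosonic cells of the lower (q,t)-hook lengths of Λ equals the product over bosonic cells of the upper (t,q)-hook lengths of the conjugate: ∏_{s ∈ BΛ} (1 - q^{a_{Λ^⊛}(s)} t^{l_{Λ*}(s)+1}) = ∏_{s ∈ BΛ'} (1 - t^{a_{(Λ')*}(s)+1} q^{l_{(Λ')^⊛}(s)}); i.e., h^{lo}_Λ(q,t) = h^{up}_{Λ'}(t,q). -/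
lemma conj_lt_iff {f : ℕ → ℕ} (hf : IsPartitionFn f) (i j : ℕ) :
    i < conjFn f j ↔ j < f i := by
  obtain ⟨hmono, N, hN⟩ := hf
  have hfin : {k : ℕ | j < f k}.Finite := by
    apply (Set.finite_Iio N).subset
    intro k hk
    by_contra hn
    simp only [Set.mem_Iio, not_lt] at hn
    have := hN k hn
    simp only [Set.mem_setOf_eq, this] at hk
    omega
  have hIio : ∀ n : ℕ, (Set.Iio n).ncard = n := by
    intro n
    rw [← Finset.coe_Iio, Set.ncard_coe_finset, Nat.card_Iio]
  constructor
  · intro hlt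
    by_contra hn
    push_neg at hn
    have hsub : {k : ℕ | j < f k} ⊆ Set.Iio i := by
      intro k hk
      simp only [Set.mem_setOf_eq] at hk
      by_contra hk'
      simp only [Set.mem_Iio, not_lt] at hk'
      have := hmono hk'
      omega
    have := Set.ncard_le_ncard hsub (Set.finite_Iio i)
    rw [hIio] at this
    exact absurd hlt (by unfold conjFn; omega)
  · intro hlt
    have hsub : Set.Iio (i+1) ⊆ {k | j < f k} := by
      intro k hk
      simp only [Set.mem_Iio, Nat.lt_succ_iff] at hk
      exact lt_of_lt_of_le hlt (hmono hk)
    have := Set.ncard_le_ncard hsub hfin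
    rw [hIio] at this
    unfold conjFn
    omega

lemma conj_conj {f : ℕ → ℕ} (hf : IsPartitionFn f) : conjFn (conjFn f) = f := by
  funext i
  have hset : {j : ℕ | i < conjFn f j} = Set.Iio (f i) := by
    ext j
    simp only [Set.mem_setOf_eq, Set.mem_Iio, conj_lt_iff hf]
  show Set.ncard {j : ℕ | i < conjFn f j} = f i
  rw [hset, ← Finset.coe_Iio, Set.ncard_coe_finset, Nat.card_Iio]

lemma bcell_swap {lam mu : ℕ → ℕ} (hl : IsPartitionFn lam) (hm : IsPartitionFn mu)
    (i j : ℕ) : BCell lam mu i j ↔ BCell (conjFn lam) (conjFn mu) j i := by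
  unfold BCell
  rw [conj_conj hm, conj_conj hl, conj_lt_iff hl]
  tauto

open MvPolynomial in
/-- `h^{lo}_Λ(q,t) = h^{up}_{Λ'}(t,q)`, i.e.
`∏_{s∈BΛ} (1 - q^{a_{Λ^⊛}(s)} t^{l_{Λ*}(s)+1})
  = ∏_{s∈BΛ'} (1 - t^{a_{(Λ')*}(s)+1} q^{l_{(Λ')^⊛}(s)})`,
in `ℤ[q,t]` with `q = X 0`, `t = X 1` (cells written 0-indexed). -/
theorem stmt17 (m : ℕ) (lam mu : ℕ → ℕ) (h : IsSuperPair m lam mu) :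
    (∏ᶠ (p : ℕ × ℕ) (_ : BCell lam mu p.1 p.2),
        (1 - (X 0 : MvPolynomial (Fin 2) ℤ) ^ (mu p.1 - p.2 - 1)
          * (X 1 : MvPolynomial (Fin 2) ℤ) ^ (conjFn lam p.2 - p.1)))
    = ∏ᶠ (p : ℕ × ℕ) (_ : BCell (conjFn lam) (conjFn mu) p.1 p.2),
        (1 - (X 1 : MvPolynomial (Fin 2) ℤ) ^ (conjFn lam p.1 - p.2)
          * (X 0 : MvPolynomial (Fin 2) ℤ) ^ (conjFn (conjFn mu) p.2 - p.1 - 1)) := by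
  obtain ⟨hl, hm, -, -, -, -⟩ := h
  have hmm := conj_conj hm
  refine finprod_mem_eq_of_bijOn (s := {p : ℕ × ℕ | BCell lam mu p.1 p.2})
    (t := {p : ℕ × ℕ | BCell (conjFn lam) (conjFn mu) p.1 p.2}) Prod.swap ?_ ?_
  · refine ⟨fun p hp => ?_, fun p _ q _ hpq => Prod.swap_injective hpq, fun p hp => ?_⟩
    · exact (bcell_swap hl hm p.1 p.2).mp hp
    · exact ⟨p.swap, (bcell_swap hl hm p.2 p.1).mpr hp, Prod.swap_swap p⟩
  · intro p _
    simp only [Prod.fst_swap, Prod.snd_swap, hmm]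
    ring
end
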